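/- Let M be a compact connected manifold with an Oxtoby–Ulam measure μ, let Γ be a countable group of homeomorphisms of M, given as the image of a representation ρ: F_∞ → Homeo(M), and let s > log 3. Then ν := Σ_{g∈F_∞} exp(-s‖g‖)·μ∘ρ(g)⁻¹ is a finite Borel measure satisfying exp(-s‖g‖)·ν ≤ ρ(g)_*ν ≤ exp(s‖g‖)·ν for all g ∈ F_∞; in particular each element of Γ preserves the bi-Lipschitz equivalence class of ν. -/

import Mathlib

/-- The group of self-homeomorphisms of `X`, under composition. -/
instance homeoGroup (X : Type*) [TopologicalSpace X] : Group (X ≃ₜ X) where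
  mul f g := g.trans f
  one := Homeomorph.refl X
  inv := Homeomorph.symm
  mul_assoc f g h := rfl
  one_mul f := by ext x; rfl
  mul_one f := by ext x; rfl
  inv_mul_cancel f := by ext x; exact f.symm_apply_apply x

/-- The embedding `F_∞ → F₂ = ⟨x,t⟩`, `x_i ↦ t^i x t^{-i}`. -/
def embed : FreeGroup ℕ →* FreeGroup Bool :=
  FreeGroup.lift fun i : ℕ =>
    (FreeGroup.of true : FreeGroup Bool) ^ i * FreeGroup.of false *
      ((FreeGroup.of true) ^ i)⁻¹

/-- Word length of `g ∈ F_∞`, measured in `F₂` via the embedding `x_i ↦ t^i x t^{-i}`. -/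
def wl (g : FreeGroup ℕ) : ℕ := (embed g).norm


open MeasureTheory

/-! ### Injectivity of `embed` -/

noncomputable def shiftHom : Multiplicative ℤ →* MulAut (FreeGroup ℤ) where
  toFun k := FreeGroup.freeGroupCongr (Equiv.addLeft (Multiplicative.toAdd k))
  map_one' := by
    ext x
    simp
  map_mul' k m := by
    ext x
    simp only [MulAut.mul_def, MulEquiv.trans_apply, FreeGroup.freeGroupCongr_apply,
      MulEquiv.coe_mk, Equiv.coe_addLeft]
    rw [FreeGroup.map.comp]
    have h2 : (fun x => Multiplicative.toAdd (k*m) + x) =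
        ((fun x => Multiplicative.toAdd k + x) ∘ fun x => Multiplicative.toAdd m + x) := by
      funext z
      simp [Function.comp, add_assoc]
    rw [h2]

noncomputable def psi : FreeGroup Bool →* FreeGroup ℤ ⋊[shiftHom] Multiplicative ℤ :=
  FreeGroup.lift fun b =>
    if b then SemidirectProduct.inr (Multiplicative.ofAdd 1)
    else SemidirectProduct.inl (FreeGroup.of 0)

lemma psi_embed (g : FreeGroup ℕ) :
    psi (embed g) = SemidirectProduct.inl (FreeGroup.map (fun i : ℕ => (i : ℤ)) g) := by
  have : (psi.comp embed) = SemidirectProduct.inl.comp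
      ((FreeGroup.map (fun i : ℕ => (i : ℤ)) : FreeGroup ℕ →* FreeGroup ℤ)) := by
    apply FreeGroup.ext_hom
    intro i
    simp only [MonoidHom.comp_apply, embed, FreeGroup.lift_apply_of, FreeGroup.map.of]
    rw [map_mul, map_mul, map_inv, map_pow]
    simp only [psi, FreeGroup.lift_apply_of, Bool.false_eq_true, if_false, if_true]
    rw [← map_pow]
    have h1 : (Multiplicative.ofAdd (1:ℤ)) ^ i = Multiplicative.ofAdd (i : ℤ) := by
      simp [← ofAdd_nsmul]
    rw [h1, ← map_inv]
    rw [← SemidirectProduct.inl_aut (φ := shiftHom) (Multiplicative.ofAdd (i:ℤ)) (FreeGroup.of 0)]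
    congr 1
  exact DFunLike.congr_fun this g

lemma embed_injective : Function.Injective embed := by
  intro a b hab
  have h := congrArg psi hab
  rw [psi_embed, psi_embed] at h
  have h2 := SemidirectProduct.inl_injective h
  have hinj : Function.Injective
      (FreeGroup.map (fun i : ℕ => (i : ℤ)) : FreeGroup ℕ → FreeGroup ℤ) := by
    have : Function.LeftInverse (FreeGroup.map Int.toNat)
        (FreeGroup.map (fun i : ℕ => (i : ℤ))) := by
      intro x
      rw [show ((FreeGroup.map Int.toNat) ((FreeGroup.map fun i : ℕ => (i:ℤ)) x)) =
        FreeGroup.map (Int.toNat ∘ (fun i : ℕ => (i:ℤ))) x from FreeGroup.map.comp _ _ _]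
      simp [Function.comp_def, FreeGroup.map.id']
    exact this.injective
  exact hinj h2

/-! ### Counting reduced words in `F₂` -/

def RL : ℕ → Finset (List (Bool × Bool))
  | 0 => {([] : List (Bool × Bool))}
  | (n+1) => (RL n).biUnion fun l =>
      ((Finset.univ : Finset (Bool × Bool)).filter fun a => l.head? ≠ some (a.1, !a.2)).image
        fun a => a :: l

lemma reduce_cons_self_iff (a : Bool × Bool) (l : List (Bool × Bool)) :
    FreeGroup.reduce (a :: l) = a :: l ↔
      FreeGroup.reduce l = l ∧ l.head? ≠ some (a.1, !a.2) := by
  constructor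
  · intro h
    rcases hr : FreeGroup.reduce l with - | ⟨hd, tl⟩
    · rw [FreeGroup.reduce.cons, hr] at h
      simp only at h
      have hl : l = [] := by
        have := h.symm
        simpa using (List.cons.injEq a l a []).mp (by simpa using this.symm) |>.2
      subst hl
      simp
    · rw [FreeGroup.reduce.cons, hr] at h
      simp only at h
      split_ifs at h with hc
      · exfalso
        have hlen := FreeGroup.Red.length_le (FreeGroup.reduce.red (L := l))
        rw [hr] at hlen
        have := congrArg List.length h
        simp at this hlen
        omega
      · have hl : l = hd :: tl := by
          exact ((List.cons.injEq a (hd :: tl) a l).mp h |>.2).symm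
        constructor
        · rw [hl, ← hr]
        · rw [hl]
          simp only [List.head?_cons, ne_eq, Option.some.injEq]
          intro hbad
          apply hc
          rw [hbad]
          exact ⟨rfl, by simp⟩
  · rintro ⟨h1, h2⟩
    rw [FreeGroup.reduce.cons, h1]
    rcases l with - | ⟨hd, tl⟩
    · rfl
    · simp only
      rw [if_neg]
      rintro ⟨hc1, hc2⟩
      apply h2
      simp only [List.head?_cons, Option.some.injEq]
      exact Prod.ext hc1.symm (by simp [hc2])

lemma mem_RL {n : ℕ} {l : List (Bool × Bool)} :
    l ∈ RL n ↔ FreeGroup.reduce l = l ∧ l.length = n := by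
  induction n generalizing l with
  | zero =>
    simp only [RL, Finset.mem_singleton]
    constructor
    · rintro rfl; exact ⟨rfl, rfl⟩
    · rintro ⟨-, h⟩; exact List.length_eq_zero_iff.mp h
  | succ n ih =>
    simp only [RL, Finset.mem_biUnion, Finset.mem_image, Finset.mem_filter, Finset.mem_univ,
      true_and]
    constructor
    · rintro ⟨l', hl', a, ha, rfl⟩
      refine ⟨(reduce_cons_self_iff a l').mpr ⟨(ih.mp hl').1, ha⟩, ?_⟩
      simp [(ih.mp hl').2]
    · rintro ⟨hred, hlen⟩
      rcases l with - | ⟨a, l'⟩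
      · simp at hlen
      · obtain ⟨h1, h2⟩ := (reduce_cons_self_iff a l').mp hred
        exact ⟨l', ih.mpr ⟨h1, by simpa using hlen⟩, a, h2, rfl⟩

lemma card_RL_head : ∀ (n : ℕ) (a : Bool × Bool),
    ((RL (n+1)).filter fun l => l.head? = some a).card ≤ 3 ^ n := by
  intro n
  induction n with
  | zero =>
    intro a
    have : ((RL 1).filter fun l => l.head? = some a) ⊆ {[a]} := by
      intro l hl
      simp only [Finset.mem_filter] at hl
      obtain ⟨hmem, hhead⟩ := hl
      obtain ⟨-, hlen⟩ := mem_RL.mp hmem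
      rcases l with - | ⟨b, l'⟩
      · simp at hlen
      · simp at hlen hhead
        subst hhead
        simp [hlen]
    simpa using Finset.card_le_card this
  | succ n ih =>
    intro a
    have hsub : ((RL (n+2)).filter fun l => l.head? = some a) ⊆
        (((Finset.univ : Finset (Bool × Bool)).erase (a.1, !a.2)).biUnion fun b =>
          ((RL (n+1)).filter fun l => l.head? = some b)).image (List.cons a) := by
      intro l hl
      simp only [Finset.mem_filter] at hl
      obtain ⟨hmem, hhead⟩ := hl
      obtain ⟨hred, hlen⟩ := mem_RL.mp hmem
      rcases l with - | ⟨c, l'⟩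
      · simp at hlen
      · simp only [List.head?_cons, Option.some.injEq] at hhead
        subst hhead
        obtain ⟨h1, h2⟩ := (reduce_cons_self_iff c l').mp hred
        rcases l' with - | ⟨b, tl⟩
        · simp at hlen
        · simp only [List.head?_cons, ne_eq, Option.some.injEq] at h2
          refine Finset.mem_image.mpr ⟨b :: tl, ?_, rfl⟩
          refine Finset.mem_biUnion.mpr ⟨b, Finset.mem_erase.mpr ⟨h2, Finset.mem_univ _⟩, ?_⟩
          refine Finset.mem_filter.mpr ⟨mem_RL.mpr ⟨h1, by simpa using hlen⟩, by simp⟩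
    calc ((RL (n+2)).filter fun l => l.head? = some a).card
        ≤ _ := Finset.card_le_card hsub
      _ ≤ _ := Finset.card_image_le
      _ ≤ ∑ b ∈ (Finset.univ : Finset (Bool × Bool)).erase (a.1, !a.2),
            ((RL (n+1)).filter fun l => l.head? = some b).card := Finset.card_biUnion_le
      _ ≤ ∑ _b ∈ (Finset.univ : Finset (Bool × Bool)).erase (a.1, !a.2), 3 ^ n :=
            Finset.sum_le_sum fun b _ => ih b
      _ = ((Finset.univ : Finset (Bool × Bool)).erase (a.1, !a.2)).card * 3 ^ n := by
            rw [Finset.sum_const, smul_eq_mul]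
      _ ≤ 3 * 3 ^ n := by
            have : ((Finset.univ : Finset (Bool × Bool)).erase (a.1, !a.2)).card = 3 := by
              rw [Finset.card_erase_of_mem (Finset.mem_univ _)]
              simp
            rw [this]
      _ = 3 ^ (n+1) := (pow_succ' 3 n).symm

lemma card_RL (n : ℕ) : (RL n).card ≤ 4 * 3 ^ n := by
  cases n with
  | zero => simp [RL]
  | succ n =>
    have hsub : RL (n+1) ⊆ (Finset.univ : Finset (Bool × Bool)).biUnion fun a =>
        ((RL (n+1)).filter fun l => l.head? = some a) := by
      intro l hl
      obtain ⟨-, hlen⟩ := mem_RL.mp hl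
      rcases l with - | ⟨a, l'⟩
      · simp at hlen
      · exact Finset.mem_biUnion.mpr ⟨a, Finset.mem_univ _,
          Finset.mem_filter.mpr ⟨hl, by simp⟩⟩
    calc (RL (n+1)).card
        ≤ _ := Finset.card_le_card hsub
      _ ≤ ∑ a ∈ (Finset.univ : Finset (Bool × Bool)),
            ((RL (n+1)).filter fun l => l.head? = some a).card := Finset.card_biUnion_le
      _ ≤ ∑ _a ∈ (Finset.univ : Finset (Bool × Bool)), 3 ^ n :=
            Finset.sum_le_sum fun a _ => card_RL_head n a
      _ = 4 * 3 ^ n := by simp [Finset.sum_const, Finset.card_univ]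
      _ ≤ 4 * 3 ^ (n+1) := by
          gcongr
          · norm_num
          · omega

/-! ### Summability -/

open ENNReal

lemma tsum_norm_lt_top {x : ℝ≥0∞} (hx : 3 * x < 1) :
    ∑' w : FreeGroup Bool, x ^ FreeGroup.norm w < ⊤ := by
  have step1 : ∑' w : FreeGroup Bool, x ^ FreeGroup.norm w ≤
      ∑' l : List (Bool × Bool), (if FreeGroup.reduce l = l then x ^ l.length else 0) := by
    have := tsum_comp_le_tsum_of_injective (FreeGroup.toWord_injective (α := Bool))
      (fun l => if FreeGroup.reduce l = l then x ^ l.length else 0)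
    refine le_trans (le_of_eq (tsum_congr fun w => ?_)) this
    simp [FreeGroup.reduce_toWord, FreeGroup.norm]
  have step2 : ∑' l : List (Bool × Bool), (if FreeGroup.reduce l = l then x ^ l.length else 0) ≤
      ∑' p : ℕ × List (Bool × Bool), (if p.2 ∈ RL p.1 then x ^ p.1 else 0) := by
    have hinj : Function.Injective (fun l : List (Bool × Bool) => (l.length, l)) := by
      intro a b h; exact (Prod.mk.injEq _ _ _ _).mp h |>.2
    have := tsum_comp_le_tsum_of_injective hinj
      (fun p : ℕ × List (Bool × Bool) => if p.2 ∈ RL p.1 then x ^ p.1 else 0)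
    refine le_trans (le_of_eq (tsum_congr fun l => ?_)) this
    by_cases h : FreeGroup.reduce l = l
    · simp only [h, if_true]
      rw [if_pos (mem_RL.mpr ⟨h, rfl⟩)]
    · simp only [h, if_false]
      rw [if_neg (fun hc => h (mem_RL.mp hc).1)]
  have step3 : ∑' p : ℕ × List (Bool × Bool), (if p.2 ∈ RL p.1 then x ^ p.1 else 0) =
      ∑' n : ℕ, ((RL n).card : ℝ≥0∞) * x ^ n := by
    rw [ENNReal.tsum_prod']
    refine tsum_congr fun n => ?_
    rw [tsum_eq_sum (s := RL n) (fun l hl => by simp [hl])]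
    simp [Finset.sum_ite_mem, Finset.sum_const, mul_comm]
  have step4 : ∑' n : ℕ, ((RL n).card : ℝ≥0∞) * x ^ n ≤ 4 * (1 - 3 * x)⁻¹ := by
    have : ∀ n : ℕ, ((RL n).card : ℝ≥0∞) * x ^ n ≤ 4 * (3 * x) ^ n := by
      intro n
      rw [mul_pow, ← mul_assoc]
      gcongr
      have h4 : ((RL n).card : ℝ≥0∞) ≤ ((4 * 3 ^ n : ℕ) : ℝ≥0∞) := by
        exact_mod_cast Nat.cast_le.mpr (card_RL n)
      refine h4.trans (le_of_eq ?_)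
      push_cast
      ring
    refine (ENNReal.tsum_le_tsum this).trans (le_of_eq ?_)
    rw [ENNReal.tsum_mul_left, ENNReal.tsum_geometric]
  have hlt : (4 : ℝ≥0∞) * (1 - 3 * x)⁻¹ < ⊤ := by
    refine ENNReal.mul_lt_top (by simp) ?_
    rw [ENNReal.inv_lt_top]
    exact tsub_pos_of_lt hx
  exact lt_of_le_of_lt (step1.trans (step2.trans (step3.le.trans step4))) hlt

lemma tsum_wl_lt_top {s : ℝ} (hs : Real.log 3 < s) :
    ∑' g : FreeGroup ℕ, ENNReal.ofReal (Real.exp (-s * (wl g : ℝ))) < ⊤ := by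
  set x : ℝ≥0∞ := ENNReal.ofReal (Real.exp (-s)) with hxdef
  have hterm : ∀ g : FreeGroup ℕ,
      ENNReal.ofReal (Real.exp (-s * (wl g : ℝ))) = x ^ wl g := by
    intro g
    rw [hxdef, ← ENNReal.ofReal_pow (Real.exp_nonneg _), ← Real.exp_nat_mul]
    ring_nf
  have hx : 3 * x < 1 := by
    have h3 : (3:ℝ) < Real.exp s := by
      rw [← Real.exp_log (by norm_num : (0:ℝ) < 3)]
      exact Real.exp_lt_exp.mpr hs
    have hexp : Real.exp (-s) < 1/3 := by
      rw [Real.exp_neg]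
      rw [inv_lt_iff_one_lt_mul₀ (Real.exp_pos s)]
      nlinarith [Real.exp_pos s]
    have : (3:ℝ≥0∞) * x = ENNReal.ofReal (3 * Real.exp (-s)) := by
      rw [ENNReal.ofReal_mul (by norm_num)]
      norm_num
      rw [hxdef]
    rw [this]
    rw [ENNReal.ofReal_lt_one]
    linarith
  calc ∑' g : FreeGroup ℕ, ENNReal.ofReal (Real.exp (-s * (wl g : ℝ)))
      = ∑' g : FreeGroup ℕ, x ^ wl g := tsum_congr hterm
    _ ≤ ∑' w : FreeGroup Bool, x ^ FreeGroup.norm w :=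
        tsum_comp_le_tsum_of_injective embed_injective (fun w => x ^ FreeGroup.norm w)
    _ < ⊤ := tsum_norm_lt_top hx

/-! ### Word-length estimates -/

lemma wl_inv (g : FreeGroup ℕ) : wl g⁻¹ = wl g := by
  unfold wl
  rw [map_inv]
  exact FreeGroup.norm_inv_eq

lemma wl_mul_le (g h : FreeGroup ℕ) : wl (g * h) ≤ wl g + wl h := by
  unfold wl
  rw [map_mul]
  exact FreeGroup.norm_mul_le _ _

/-! ### Measure-theoretic lemmas -/

section MeasAux
variable {M : Type*} [TopologicalSpace M] [MeasurableSpace M] [BorelSpace M]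

set_option linter.unusedSectionVars false

lemma homeo_mul_coe (f g : M ≃ₜ M) : ⇑(f * g) = ⇑f ∘ ⇑g := rfl

lemma sum_reindex {ι : Type*} (e : ι ≃ ι) (f : ι → Measure M) :
    Measure.sum (fun i => f (e i)) = Measure.sum f := by
  ext t ht
  rw [Measure.sum_apply _ ht, Measure.sum_apply _ ht]
  exact e.tsum_eq (fun i => f i t)

lemma map_sum' {f : M → M} (hf : Measurable f) {ι : Type*} (μs : ι → Measure M) :
    Measure.map f (Measure.sum μs) = Measure.sum (fun i => Measure.map f (μs i)) := by
  ext t ht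
  rw [Measure.map_apply hf ht, Measure.sum_apply _ (hf ht), Measure.sum_apply _ ht]
  exact tsum_congr fun i => (Measure.map_apply hf ht).symm

lemma smul_sum' {ι : Type*} (c : ℝ≥0∞) (μs : ι → Measure M) :
    c • Measure.sum μs = Measure.sum (fun i => c • μs i) := by
  ext t ht
  rw [Measure.smul_apply, Measure.sum_apply _ ht, Measure.sum_apply _ ht, smul_eq_mul,
    ← ENNReal.tsum_mul_left]
  exact tsum_congr fun i => rfl

lemma smul_mono_meas {c d : ℝ≥0∞} (h : c ≤ d) (m : Measure M) : c • m ≤ d • m := by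
  refine Measure.le_iff.mpr fun t ht => ?_
  rw [Measure.smul_apply, Measure.smul_apply, smul_eq_mul, smul_eq_mul]
  exact mul_le_mul_left h _

lemma sum_mono' {ι : Type*} {μs νs : ι → Measure M} (h : ∀ i, μs i ≤ νs i) :
    Measure.sum μs ≤ Measure.sum νs := by
  refine Measure.le_iff.mpr fun t ht => ?_
  rw [Measure.sum_apply _ ht, Measure.sum_apply _ ht]
  exact ENNReal.tsum_le_tsum fun i => (h i) t

variable (μ : Measure M) (ρ : FreeGroup ℕ →* (M ≃ₜ M)) (s : ℝ)

noncomputable def cc (g : FreeGroup ℕ) : ℝ≥0∞ := ENNReal.ofReal (Real.exp (-s * (wl g : ℝ)))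

noncomputable def nu : Measure M :=
  Measure.sum fun g : FreeGroup ℕ => cc s g • Measure.map (ρ g) μ

lemma map_nu (g : FreeGroup ℕ) :
    Measure.map (ρ g) (nu μ ρ s) =
      Measure.sum fun h : FreeGroup ℕ => cc s (g⁻¹ * h) • Measure.map (ρ h) μ := by
  rw [nu, map_sum' (ρ g).continuous.measurable]
  have h1 : (fun h : FreeGroup ℕ => Measure.map (ρ g) (cc s h • Measure.map (ρ h) μ)) =
      fun h : FreeGroup ℕ => cc s h • Measure.map (ρ (g * h)) μ := by
    funext h
    rw [Measure.map_smul, Measure.map_map (ρ g).continuous.measurable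
      (ρ h).continuous.measurable, ← homeo_mul_coe, ← map_mul]
  rw [h1]
  have h2 : (fun h : FreeGroup ℕ => cc s h • Measure.map (ρ (g * h)) μ) =
      fun h : FreeGroup ℕ =>
        (fun k : FreeGroup ℕ => cc s (g⁻¹ * k) • Measure.map (ρ k) μ) ((Equiv.mulLeft g) h) := by
    funext h
    simp [Equiv.mulLeft]
  rw [h2]
  exact sum_reindex (Equiv.mulLeft g) (fun k : FreeGroup ℕ => cc s (g⁻¹ * k) • Measure.map (ρ k) μ)

lemma cc_lower {s : ℝ} (hs : 0 < s) (g h : FreeGroup ℕ) :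
    cc s g * cc s h ≤ cc s (g⁻¹ * h) := by
  unfold cc
  rw [← ENNReal.ofReal_mul (Real.exp_nonneg _), ← Real.exp_add]
  apply ENNReal.ofReal_le_ofReal
  apply Real.exp_le_exp.mpr
  have hle : (wl (g⁻¹ * h) : ℝ) ≤ (wl g : ℝ) + wl h := by
    have := wl_mul_le g⁻¹ h
    rw [wl_inv] at this
    exact_mod_cast this
  nlinarith

lemma cc_upper {s : ℝ} (hs : 0 < s) (g h : FreeGroup ℕ) :
    cc s (g⁻¹ * h) ≤ ENNReal.ofReal (Real.exp (s * (wl g : ℝ))) * cc s h := by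
  unfold cc
  rw [← ENNReal.ofReal_mul (Real.exp_nonneg _), ← Real.exp_add]
  apply ENNReal.ofReal_le_ofReal
  apply Real.exp_le_exp.mpr
  have hle : (wl h : ℝ) ≤ (wl g : ℝ) + wl (g⁻¹ * h) := by
    have := wl_mul_le g (g⁻¹ * h)
    rw [mul_inv_cancel_left] at this
    exact_mod_cast this
  nlinarith

end MeasAux

/-- Let `M` be a compact connected manifold (possibly with boundary) with an Oxtoby–Ulam
measure `μ`, let `ρ : F_∞ → Homeo(M)` and `s > log 3`. Then
`ν := ∑_{g ∈ F_∞} exp(-s‖g‖) μ ∘ ρ(g)⁻¹` is a finite Borel measure with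
`exp(-s‖g‖) ν ≤ ρ(g)_* ν ≤ exp(s‖g‖) ν` for all `g`. -/
theorem averaged_measure_quasi_invariant {n : ℕ} [NeZero n] {M : Type*}
    [TopologicalSpace M] [CompactSpace M] [ConnectedSpace M] [T2Space M]
    [ChartedSpace (EuclideanHalfSpace n) M] [MeasurableSpace M] [BorelSpace M]
    (μ : Measure M) [IsProbabilityMeasure μ] [μ.IsOpenPosMeasure] [NullSingletonClass μ]
    (hbd : μ ((modelWithCornersEuclideanHalfSpace n).boundary M) = 0)
    (Γ : Subgroup (M ≃ₜ M)) [Countable Γ]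
    (ρ : FreeGroup ℕ →* (M ≃ₜ M)) (hρ : ρ.range = Γ)
    (s : ℝ) (hs : Real.log 3 < s) :
    IsFiniteMeasure (Measure.sum fun g : FreeGroup ℕ =>
      ENNReal.ofReal (Real.exp (-s * (wl g : ℝ))) • Measure.map (ρ g) μ) ∧
    ∀ (g : FreeGroup ℕ) (A : Set M),
      ENNReal.ofReal (Real.exp (-s * (wl g : ℝ))) *
          (Measure.sum fun h : FreeGroup ℕ =>
            ENNReal.ofReal (Real.exp (-s * (wl h : ℝ))) • Measure.map (ρ h) μ) A ≤
        Measure.map (ρ g) (Measure.sum fun h : FreeGroup ℕ =>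
            ENNReal.ofReal (Real.exp (-s * (wl h : ℝ))) • Measure.map (ρ h) μ) A ∧
      Measure.map (ρ g) (Measure.sum fun h : FreeGroup ℕ =>
            ENNReal.ofReal (Real.exp (-s * (wl h : ℝ))) • Measure.map (ρ h) μ) A ≤
        ENNReal.ofReal (Real.exp (s * (wl g : ℝ))) *
          (Measure.sum fun h : FreeGroup ℕ =>
            ENNReal.ofReal (Real.exp (-s * (wl h : ℝ))) • Measure.map (ρ h) μ) A := by
  have hspos : 0 < s := lt_trans (Real.log_pos (by norm_num)) hs
  have hnu : (Measure.sum fun g : FreeGroup ℕ =>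
      ENNReal.ofReal (Real.exp (-s * (wl g : ℝ))) • Measure.map (ρ g) μ) = nu μ ρ s := rfl
  constructor
  · refine ⟨?_⟩
    rw [hnu, nu, Measure.sum_apply _ MeasurableSet.univ]
    have : ∀ g : FreeGroup ℕ, (cc s g • Measure.map (ρ g) μ) Set.univ = cc s g := by
      intro g
      rw [Measure.smul_apply, smul_eq_mul,
        Measure.map_apply (ρ g).continuous.measurable MeasurableSet.univ]
      simp
    rw [tsum_congr this]
    exact tsum_wl_lt_top hs
  · intro g A
    have hlow : cc s g • nu μ ρ s ≤ Measure.map (ρ g) (nu μ ρ s) := by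
      rw [map_nu, nu, smul_sum']
      refine sum_mono' fun h => ?_
      rw [smul_smul]
      exact smul_mono_meas (cc_lower hspos g h) _
    have hup : Measure.map (ρ g) (nu μ ρ s) ≤
        ENNReal.ofReal (Real.exp (s * (wl g : ℝ))) • nu μ ρ s := by
      rw [map_nu, nu, smul_sum']
      refine sum_mono' fun h => ?_
      rw [smul_smul]
      exact smul_mono_meas (cc_upper hspos g h) _
    constructor
    · have := Measure.le_iff'.mp hlow A
      rw [Measure.smul_apply, smul_eq_mul] at this
      rw [hnu]
      exact this
    · have := Measure.le_iff'.mp hup A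
      rw [Measure.smul_apply, smul_eq_mul] at this
      rw [hnu]
      exact this
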